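/- Let A(m,l) = l + l^{-1} - m^{-4} + m^{-2} + 2 + m^2 - m^4. For every nonzero β = (β₁, β₂) ∈ ℤ^2, the face polynomial A^β (the sum of monomials of A whose exponent vectors minimize β₁·deg_m + β₂·deg_l) is one of: l, l^{-1}, m^4 (up to sign), m^{-4} (up to sign), l − m^4, l − m^{-4}, l^{-1} − m^4, or l^{-1} − m^{-4} (each up to sign and possibly with additional monomials only when β is parallel to special directions), and in particular A^β has no critical zero in (ℂ*)^2, i.e., the system consisting of A^β alone never has a nonsimple zero pattern making (A, B)^β degenerate when paired with B^β ∈ {−x, m^p l^q, m^p l^q − x}. -/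

import Mathlib

open Finset

/-- Exponent set of the figure-eight A-polynomial
A(m,l) = l + l⁻¹ - m⁻⁴ + m⁻² + 2 + m² - m⁴. -/
def SA : Finset (ℤ × ℤ) :=
  {(0, 1), (0, -1), (-4, 0), (-2, 0), (0, 0), (2, 0), (4, 0)}

/-- Coefficients of the figure-eight A-polynomial. -/
def cA : ℤ × ℤ → ℂ := fun e =>
  if e = (0, 1) then 1 else if e = (0, -1) then 1 else
  if e = (-4, 0) then -1 else if e = (-2, 0) then 1 else
  if e = (0, 0) then 2 else if e = (2, 0) then 1 else -1

def pairing (β e : ℤ × ℤ) : ℤ := β.1 * e.1 + β.2 * e.2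

/-- The truncation A^β of A to the face of its Newton polygon minimizing ⟨·, β⟩. -/
noncomputable def faceA (β : ℤ × ℤ) (m l : ℂ) : ℂ :=
  ∑ e ∈ SA.filter (fun e => ∀ e' ∈ SA, pairing β e ≤ pairing β e'),
    cA e * m ^ e.1 * l ^ e.2

/-- Exponent set of B(m,l) = m^p l^q - x. -/
def SB (p q : ℤ) : Finset (ℤ × ℤ) := {(p, q), (0, 0)}

noncomputable def cB (p q : ℤ) (x : ℂ) : ℤ × ℤ → ℂ := fun e =>
  if e = (p, q) then 1 else -x

/-- The truncation B^β of B. -/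
noncomputable def faceB (p q : ℤ) (x : ℂ) (β : ℤ × ℤ) (m l : ℂ) : ℂ :=
  ∑ e ∈ (SB p q).filter (fun e => ∀ e' ∈ SB p q, pairing β e ≤ pairing β e'),
    cB p q x e * m ^ e.1 * l ^ e.2

/-- Jacobian of the truncated system (A^β, B^β). -/
noncomputable def jacFace (p q : ℤ) (x : ℂ) (β : ℤ × ℤ) (m l : ℂ) : ℂ :=
  deriv (fun m' => faceA β m' l) m * deriv (fun l' => faceB p q x β m l') l -
    deriv (fun l' => faceA β m l') l * deriv (fun m' => faceB p q x β m' l) m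

/-!
Common zeros of a face system exist only for `x = 1`, so the set of bad `x` lies in `{1}`.
A face of the Newton polygon of `A` that is a single vertex gives a monomial, which has no zero
on the torus. Hence `A^β` can vanish only for the primitive normals `±(1, 4)`, `±(1, -4)` of the
four edges, where `A^β` is a binomial and its zeros form the curve `l = m^c`, `c = ±4`.
Likewise `B^β` can vanish only when `β ⊥ (p, q)`, and then `B^β = m^p l^q - x`.
But `β ⊥ (p, q)` and `β ∥ (1, c)` give `p + c q = 0`, so on the curve `m^p l^q = m^(p + c q) = 1`.
-/

def face (S : Finset (ℤ × ℤ)) (β : ℤ × ℤ) : Finset (ℤ × ℤ) :=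
  S.filter fun e => ∀ e' ∈ S, pairing β e ≤ pairing β e'

noncomputable def facePoly (S : Finset (ℤ × ℤ)) (c : ℤ × ℤ → ℂ) (β : ℤ × ℤ) (m l : ℂ) : ℂ :=
  ∑ e ∈ face S β, c e * m ^ e.1 * l ^ e.2

theorem faceA_eq_facePoly (β : ℤ × ℤ) (m l : ℂ) : faceA β m l = facePoly SA cA β m l := rfl

theorem faceB_eq_facePoly (p q : ℤ) (x : ℂ) (β : ℤ × ℤ) (m l : ℂ) :
    faceB p q x β m l = facePoly (SB p q) (cB p q x) β m l := rfl

section Face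

variable {S : Finset (ℤ × ℤ)} {c : ℤ × ℤ → ℂ} {β e₀ e₁ : ℤ × ℤ} {m l : ℂ}

theorem face_eq_singleton (he₀ : e₀ ∈ S)
    (hmin : ∀ e ∈ S, e ≠ e₀ → pairing β e₀ < pairing β e) : face S β = {e₀} := by
  ext e
  simp only [face, mem_filter, mem_singleton]
  constructor
  · rintro ⟨he, hle⟩
    by_contra hne
    exact (hle e₀ he₀).not_gt (hmin e he hne)
  · rintro rfl
    refine ⟨he₀, fun e' he' => ?_⟩
    rcases eq_or_ne e' e with rfl | hne
    exacts [le_rfl, (hmin e' he' hne).le]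

theorem facePoly_ne_zero_of_face_eq_singleton (h : face S β = {e₀}) (hc : c e₀ ≠ 0)
    (hm : m ≠ 0) (hl : l ≠ 0) : facePoly S c β m l ≠ 0 := by
  rw [facePoly, h, sum_singleton]
  exact mul_ne_zero (mul_ne_zero hc (zpow_ne_zero _ hm)) (zpow_ne_zero _ hl)

theorem facePoly_of_face_eq_pair (h : face S β = {e₀, e₁}) (hne : e₀ ≠ e₁) :
    facePoly S c β m l = c e₀ * m ^ e₀.1 * l ^ e₀.2 + c e₁ * m ^ e₁.1 * l ^ e₁.2 := by
  rw [facePoly, h, sum_pair hne]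

end Face

theorem cA_ne_zero : ∀ e ∈ SA, cA e ≠ 0 := by
  intro e he
  fin_cases he <;> norm_num [cA]

theorem edge_normal_of_faceA_eq_zero {b₁ b₂ : ℤ} {m l : ℂ} (hm : m ≠ 0) (hl : l ≠ 0)
    (h : faceA (b₁, b₂) m l = 0) : b₂ = 4 * b₁ ∨ b₂ = -4 * b₁ := by
  by_contra! hne
  obtain ⟨e₀, he₀, hmin⟩ : ∃ e₀ ∈ SA, ∀ e ∈ SA, e ≠ e₀ →
      pairing (b₁, b₂) e₀ < pairing (b₁, b₂) e := by
    rcases hne.1.lt_or_gt with h₁ | h₁ <;> rcases hne.2.lt_or_gt with h₂ | h₂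
    · refine ⟨(0, 1), by decide, fun e he hne => ?_⟩
      fin_cases he <;> first | exact absurd rfl hne | (dsimp only [pairing]; omega)
    · refine ⟨(-4, 0), by decide, fun e he hne => ?_⟩
      fin_cases he <;> first | exact absurd rfl hne | (dsimp only [pairing]; omega)
    · refine ⟨(4, 0), by decide, fun e he hne => ?_⟩
      fin_cases he <;> first | exact absurd rfl hne | (dsimp only [pairing]; omega)
    · refine ⟨(0, -1), by decide, fun e he hne => ?_⟩
      fin_cases he <;> first | exact absurd rfl hne | (dsimp only [pairing]; omega)
  exact facePoly_ne_zero_of_face_eq_singleton (face_eq_singleton he₀ hmin)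
    (cA_ne_zero e₀ he₀) hm hl h

theorem eq_zpow_of_faceA_eq_zero {β : ℤ × ℤ} (hβ : IsCoprime β.1 β.2) {m l : ℂ}
    (hm : m ≠ 0) (hl : l ≠ 0) (h : faceA β m l = 0) :
    ∃ c : ℤ, β.1 ≠ 0 ∧ β.2 = c * β.1 ∧ l = m ^ c := by
  obtain ⟨b₁, b₂⟩ := β
  have hedge := edge_normal_of_faceA_eq_zero hm hl h
  have hb₁ : b₁ = 1 ∨ b₁ = -1 := Int.isUnit_iff.mp <|
    hβ.isUnit_of_dvd' dvd_rfl (by rcases hedge with rfl | rfl <;> exact dvd_mul_left _ _)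
  rw [faceA_eq_facePoly] at h
  rcases hb₁ with rfl | rfl <;> rcases hedge with rfl | rfl
  · rw [facePoly_of_face_eq_pair (e₀ := (0, -1)) (e₁ := (-4, 0)) (by decide) (by decide)] at h
    norm_num [cA] at h
    exact ⟨4, one_ne_zero, rfl, inv_injective (by norm_cast; linear_combination h)⟩
  · rw [facePoly_of_face_eq_pair (e₀ := (0, 1)) (e₁ := (-4, 0)) (by decide) (by decide)] at h
    norm_num [cA] at h
    exact ⟨-4, one_ne_zero, rfl, by rw [zpow_neg]; norm_cast; linear_combination h⟩
  · rw [facePoly_of_face_eq_pair (e₀ := (0, 1)) (e₁ := (4, 0)) (by decide) (by decide)] at h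
    norm_num [cA] at h
    exact ⟨4, by norm_num, rfl, by norm_cast; linear_combination h⟩
  · rw [facePoly_of_face_eq_pair (e₀ := (0, -1)) (e₁ := (4, 0)) (by decide) (by decide)] at h
    norm_num [cA] at h
    refine ⟨-4, by norm_num, rfl, inv_injective ?_⟩
    rw [zpow_neg, inv_inv]
    norm_cast
    linear_combination h

theorem eq_of_faceB_eq_zero {p q : ℤ} (hpq : (p, q) ≠ 0) {x : ℂ} (hx : x ≠ 0) {β : ℤ × ℤ}
    {m l : ℂ} (hm : m ≠ 0) (hl : l ≠ 0) (h : faceB p q x β m l = 0) :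
    pairing β (p, q) = 0 ∧ m ^ p * l ^ q = x := by
  have hcB : cB p q x (0, 0) = -x := if_neg hpq.symm
  rw [faceB_eq_facePoly] at h
  rcases lt_trichotomy (pairing β (p, q)) 0 with hneg | hzero | hpos
  · refine absurd h
      (facePoly_ne_zero_of_face_eq_singleton (e₀ := (p, q)) ?_ (by simp [cB]) hm hl)
    refine face_eq_singleton (by simp [SB]) fun e he hne => ?_
    obtain rfl : e = (0, 0) := by simpa [SB, hne] using he
    simpa [pairing] using hneg
  · refine ⟨hzero, ?_⟩
    have hface : face (SB p q) β = {(p, q), (0, 0)} := by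
      refine filter_true_of_mem fun e he e' he' => ?_
      simp only [SB, mem_insert, mem_singleton] at he he'
      rcases he with rfl | rfl <;> rcases he' with rfl | rfl <;>
        simp only [pairing] at hzero ⊢ <;> omega
    rw [facePoly_of_face_eq_pair hface hpq, hcB] at h
    simp only [cB, if_pos, zpow_zero] at h
    linear_combination h
  · refine absurd h (facePoly_ne_zero_of_face_eq_singleton ?_ (hcB ▸ neg_ne_zero.mpr hx) hm hl)
    refine face_eq_singleton (by simp [SB]) fun e he hne => ?_
    obtain rfl : e = (p, q) := by simpa [SB, hne] using he
    simpa [pairing] using hpos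

theorem fig8_face_systems_generically_nondegenerate
    (p q : ℤ) (hpq : IsCoprime p q) :
    {x : ℂ | x ≠ 0 ∧ ∃ β : ℤ × ℤ, β ≠ 0 ∧ IsCoprime β.1 β.2 ∧
      ∃ m l : ℂ, m ≠ 0 ∧ l ≠ 0 ∧
        faceA β m l = 0 ∧ faceB p q x β m l = 0 ∧
        jacFace p q x β m l = 0}.Finite := by
  refine (Set.finite_singleton (1 : ℂ)).subset ?_
  rintro x ⟨hx, β, -, hβ, m, l, hm, hl, hA, hB, -⟩
  have hpq₀ : (p, q) ≠ 0 := by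
    rintro h
    obtain ⟨rfl, rfl⟩ := Prod.mk_eq_zero.mp h
    exact not_isCoprime_zero_zero hpq
  obtain ⟨hperp, rfl⟩ := eq_of_faceB_eq_zero hpq₀ hx hm hl hB
  obtain ⟨c, hβ₁, hβ₂, rfl⟩ := eq_zpow_of_faceA_eq_zero hβ hm hl hA
  have hpc : p + c * q = 0 := by
    refine (mul_eq_zero.mp ?_).resolve_left hβ₁
    rw [← hperp, pairing, hβ₂]
    ring
  rw [Set.mem_singleton_iff, ← zpow_mul, ← zpow_add₀ hm, hpc, zpow_zero]
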